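/- If a digraph G has exactly two connected components A and B with A having strictly fewer vertices than B, and A is not switching-stable, then G is reconstructible from its deck. -/

import Mathlib

/-!
Let `S` be the smaller component of `G`. A switching of `H` is isomorphic to a switching of `G`
and switching does not change the underlying graph, so after relabelling `H` has the underlying
graph of `G`. An isomorphism between digraphs with this underlying graph maps `S` onto itself,
since `Sᶜ` is connected and larger than `S`; hence the deck determines the multiset, over all
switchings, of the pairs (class of the part on `S`, class of the part on `Sᶜ`). The switchings
at the `|Sᶜ| > |S|` vertices outside `S` keep the part of `H` on `S`, while a class other than
that of `G`'s part on `S` occurs at most `|S|` times for `G`; so the parts on `S` agree. Finally,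
a vertex `v ∈ S` at which `G.induce S` is not switching-stable gives a pair that only a switching
of `H` at a vertex of `S` can match, and that switching keeps the part of `H` on `Sᶜ`.
-/

/-- A digraph on a vertex type `V`: a set of ordered pairs of vertices,
given by its adjacency relation. -/
structure Dgraph (V : Type*) where
  Adj : V → V → Prop

namespace Dgraph

variable {V W : Type*}

/-- Switching at a vertex `v`: every edge incident with `v` is reversed. -/
def switchV (G : Dgraph V) (v : V) : Dgraph V :=
  ⟨fun a b => ((a = v ∨ b = v) ∧ G.Adj b a) ∨ (¬(a = v ∨ b = v) ∧ G.Adj a b)⟩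

/-- Switching about a set `S`: every edge with exactly one endpoint in `S` is reversed. -/
def switchSet (G : Dgraph V) (S : Set V) : Dgraph V :=
  ⟨fun a b => (((a ∈ S) ↔ (b ∈ S)) ∧ G.Adj a b) ∨ (¬((a ∈ S) ↔ (b ∈ S)) ∧ G.Adj b a)⟩

/-- Relabelling of a digraph by a permutation: `(γ a, γ b)` is an edge of `G.relabel γ`
whenever `(a,b)` is an edge of `G`. -/
def relabel (G : Dgraph V) (γ : Equiv.Perm V) : Dgraph V :=
  ⟨fun a b => G.Adj (γ.symm a) (γ.symm b)⟩

/-- Isomorphism of digraphs (possibly on different vertex types). -/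
def DIso (G : Dgraph V) (H : Dgraph W) : Prop :=
  ∃ e : V ≃ W, ∀ a b, G.Adj a b ↔ H.Adj (e a) (e b)

/-- An oriented graph: a digraph with no loops and no pair of opposite edges. -/
def IsOriented (G : Dgraph V) : Prop := ∀ a b, G.Adj a b → ¬ G.Adj b a

/-- The underlying undirected (simple) graph of a digraph. -/
def underlying (G : Dgraph V) : SimpleGraph V where
  Adj a b := a ≠ b ∧ (G.Adj a b ∨ G.Adj b a)
  symm := ⟨fun a b ⟨h1, h2⟩ => ⟨h1.symm, h2.symm⟩⟩
  loopless := ⟨fun a ⟨h1, _⟩ => h1 rfl⟩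

/-- The vertex set of the connected component (of the underlying graph) containing `v`. -/
def compSet (G : Dgraph V) (v : V) : Set V := {x | (underlying G).Reachable v x}

/-- The induced subdigraph on a set of vertices. -/
def induce (G : Dgraph V) (S : Set V) : Dgraph S := ⟨fun a b => G.Adj a b⟩

/-- A digraph is switching-stable if each vertex switching is isomorphic to it. -/
def SwitchStable (G : Dgraph V) : Prop := ∀ v, DIso (G.switchV v) G

/-- Isomorphism as a setoid on digraphs with a fixed vertex type. -/
def isoSetoid (V : Type*) : Setoid (Dgraph V) where
  r := DIso
  iseqv := by
    refine ⟨fun G => ⟨Equiv.refl V, fun a b => Iff.rfl⟩, ?_, ?_⟩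
    · rintro G H ⟨e, h⟩
      exact ⟨e.symm, fun a b => by simpa using (h (e.symm a) (e.symm b)).symm⟩
    · rintro G H K ⟨e, h⟩ ⟨f, h2⟩
      exact ⟨e.trans f, fun a b => (h a b).trans (h2 _ _)⟩

/-- The switching deck: the multiset of isomorphism classes of vertex switchings. -/
def deck (G : Dgraph V) [Fintype V] : Multiset (Quotient (isoSetoid V)) :=
  Finset.univ.val.map fun v => Quotient.mk (isoSetoid V) (G.switchV v)

/-- The `t`-deck: the deck augmented by `t` copies of the isomorphism class of `G`. -/
def tdeck (G : Dgraph V) [Fintype V] (t : ℕ) : Multiset (Quotient (isoSetoid V)) :=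
  Multiset.replicate t (Quotient.mk (isoSetoid V) G) + G.deck

end Dgraph

open Finset

namespace Dgraph

variable {V W : Type*}

local notation "⟦" X "⟧ᵢ" => Quotient.mk (isoSetoid _) X

@[ext]
theorem ext {X Y : Dgraph V} (h : ∀ a b, X.Adj a b ↔ Y.Adj a b) : X = Y := by
  cases X; cases Y
  congr
  funext a b
  exact propext (h a b)

theorem DIso.symm {X : Dgraph V} {Y : Dgraph W} (h : DIso X Y) : DIso Y X := by
  obtain ⟨e, he⟩ := h
  exact ⟨e.symm, fun a b => by simpa using (he (e.symm a) (e.symm b)).symm⟩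

theorem DIso.trans {Z : Type*} {X : Dgraph V} {Y : Dgraph W} {K : Dgraph Z}
    (h₁ : DIso X Y) (h₂ : DIso Y K) : DIso X K := by
  obtain ⟨e, he⟩ := h₁
  obtain ⟨f, hf⟩ := h₂
  exact ⟨e.trans f, fun a b => (he a b).trans (hf _ _)⟩

theorem underlying_adj_iff_of_iso {X : Dgraph V} {Y : Dgraph W} {e : V ≃ W}
    (he : ∀ a b, X.Adj a b ↔ Y.Adj (e a) (e b)) (a b : V) :
    Y.underlying.Adj (e a) (e b) ↔ X.underlying.Adj a b := by
  simp only [underlying, ne_eq, EmbeddingLike.apply_eq_iff_eq, he]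

def underlyingIso {X : Dgraph V} {Y : Dgraph W} (e : V ≃ W)
    (he : ∀ a b, X.Adj a b ↔ Y.Adj (e a) (e b)) : X.underlying ≃g Y.underlying :=
  ⟨e, underlying_adj_iff_of_iso he _ _⟩

theorem underlying_switchV (X : Dgraph V) (v : V) : (X.switchV v).underlying = X.underlying := by
  ext a b
  simp only [underlying, switchV]
  by_cases h : a = v ∨ b = v <;> simp [h] <;> tauto

theorem diso_relabel (X : Dgraph V) (γ : Equiv.Perm V) : DIso X (X.relabel γ) :=
  ⟨γ, fun a b => by simp [relabel]⟩

theorem relabel_eq_of_iso {X Y : Dgraph V} {γ : Equiv.Perm V}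
    (hγ : ∀ a b, X.Adj a b ↔ Y.Adj (γ a) (γ b)) : X.relabel γ = Y := by
  ext a b
  simp [relabel, hγ]

theorem switchV_relabel (X : Dgraph V) (γ : Equiv.Perm V) (v : V) :
    (X.relabel γ).switchV (γ v) = (X.switchV v).relabel γ := by
  ext a b
  simp only [switchV, relabel, Equiv.symm_apply_eq]

theorem deck_relabel [Fintype V] (X : Dgraph V) (γ : Equiv.Perm V) :
    (X.relabel γ).deck = X.deck := by
  have hswitch : ∀ v, ⟦(X.relabel γ).switchV (γ v)⟧ᵢ = ⟦X.switchV v⟧ᵢ :=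
    fun v => Quotient.sound ((switchV_relabel X γ v).symm ▸ (diso_relabel _ γ).symm)
  calc (X.relabel γ).deck
      = (univ.val.map γ).map fun v => ⟦(X.relabel γ).switchV v⟧ᵢ := by
        rw [Multiset.map_univ_val_equiv]; rfl
    _ = X.deck := by rw [Multiset.map_map]; exact Multiset.map_congr rfl fun v _ => hswitch v

theorem exists_diso_underlying_eq_of_deck_eq [Fintype V] {H G : Dgraph V}
    (hdeck : H.deck = G.deck) (v : V) :
    ∃ K : Dgraph V, DIso H K ∧ K.deck = G.deck ∧ K.underlying = G.underlying := by
  have hmem : ⟦H.switchV v⟧ᵢ ∈ G.deck :=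
    hdeck ▸ Multiset.mem_map_of_mem _ (mem_univ v)
  obtain ⟨v', -, hv'⟩ := Multiset.mem_map.1 hmem
  obtain ⟨γ, hγ⟩ := Quotient.exact hv'.symm
  refine ⟨H.relabel γ, diso_relabel H γ, by rw [deck_relabel, hdeck], ?_⟩
  rw [← underlying_switchV _ (γ v), switchV_relabel, relabel_eq_of_iso hγ, underlying_switchV]

theorem rel_switchV_of_deck_eq [Fintype V] {X Y : Dgraph V} (h : X.deck = Y.deck) :
    Multiset.Rel DIso (univ.val.map X.switchV) (univ.val.map Y.switchV) := by
  have : Multiset.Rel (· = ·) ((univ.val.map X.switchV).map fun X => ⟦X⟧ᵢ)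
      ((univ.val.map Y.switchV).map fun X => ⟦X⟧ᵢ) := by
    rw [Multiset.rel_eq, Multiset.map_map, Multiset.map_map]; exact h
  exact (Multiset.rel_map.1 this).mono fun _ _ _ _ => Quotient.exact

/-- `T` is either empty or the vertex set of a connected component of `X.underlying`. -/
def IsComponent (X : Dgraph V) (T : Set V) : Prop :=
  (∀ a b, X.underlying.Adj a b → (a ∈ T ↔ b ∈ T)) ∧
    ∀ a ∈ T, ∀ b ∈ T, X.underlying.Reachable a b

theorem isComponent_congr {X Y : Dgraph V} (h : X.underlying = Y.underlying) {T : Set V} :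
    X.IsComponent T ↔ Y.IsComponent T := by
  rw [IsComponent, IsComponent, h]

theorem IsComponent.switchV {X : Dgraph V} {T : Set V} (h : X.IsComponent T) (v : V) :
    (X.switchV v).IsComponent T :=
  (isComponent_congr (underlying_switchV X v)).2 h

theorem IsComponent.mem_iff_of_reachable {X : Dgraph V} {T : Set V} (h : X.IsComponent T)
    {a b : V} (hab : X.underlying.Reachable a b) : a ∈ T ↔ b ∈ T := by
  obtain ⟨p⟩ := hab
  induction p with
  | nil => rfl
  | cons hadj _ ih => exact (h.1 _ _ hadj).trans ih

theorem IsComponent.mem_iff_of_adj {X : Dgraph V} {T : Set V} (h : X.IsComponent T)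
    {a b : V} (hab : X.Adj a b) : a ∈ T ↔ b ∈ T := by
  by_cases hne : a = b
  · rw [hne]
  · exact h.1 a b ⟨hne, Or.inl hab⟩

theorem isComponent_compSet (X : Dgraph V) (v : V) : X.IsComponent (X.compSet v) :=
  ⟨fun _ _ hab => ⟨fun ha => ha.trans hab.reachable, fun hb => hb.trans hab.symm.reachable⟩,
    fun _ ha _ hb => ha.symm.trans hb⟩

theorem compSet_eq_compl {X : Dgraph V} {u w : V} (hdiff : ¬ X.underlying.Reachable u w)
    (hcover : ∀ x, X.underlying.Reachable u x ∨ X.underlying.Reachable w x) :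
    X.compSet w = (X.compSet u)ᶜ := by
  ext x
  exact ⟨fun hw hu => hdiff (hu.trans hw.symm), (hcover x).resolve_left⟩

section Parts

variable {S : Set V}

theorem apply_notMem_of_isComponent_compl [Finite V] {X Y : Dgraph V} {e : V ≃ V}
    (he : ∀ a b, X.Adj a b ↔ Y.Adj (e a) (e b)) (hX : X.IsComponent Sᶜ) (hY : Y.IsComponent Sᶜ)
    (hcard : Nat.card S < Nat.card ↥Sᶜ) {x : V} (hx : x ∉ S) : e x ∉ S := by
  intro hex
  have hmaps : ∀ b : ↥Sᶜ, e b ∈ S := fun b => by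
    have hreach := (hX.2 x hx b b.2).map (underlyingIso e he).toHom
    by_contra hb
    exact (hY.mem_iff_of_reachable hreach).2 hb hex
  have hinj : Function.Injective fun b : ↥Sᶜ => (⟨e b, hmaps b⟩ : S) :=
    fun b c hbc => Subtype.ext (e.injective (congrArg Subtype.val hbc))
  exact (Nat.card_le_card_of_injective _ hinj).not_gt hcard

theorem DIso.exists_mem_iff_of_isComponent_compl [Finite V] {X Y : Dgraph V}
    (hX : X.IsComponent Sᶜ) (hY : Y.IsComponent Sᶜ) (hcard : Nat.card S < Nat.card ↥Sᶜ)
    (h : DIso X Y) :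
    ∃ e : V ≃ V, (∀ a b, X.Adj a b ↔ Y.Adj (e a) (e b)) ∧ ∀ x, x ∈ S ↔ e x ∈ S := by
  obtain ⟨e, he⟩ := h
  have he' : ∀ a b, Y.Adj a b ↔ X.Adj (e.symm a) (e.symm b) := fun a b => by simp [he]
  refine ⟨e, he, fun x =>
    ⟨fun hx => ?_, not_imp_not.1 (apply_notMem_of_isComponent_compl he hX hY hcard)⟩⟩
  by_contra hex
  simpa [hx] using apply_notMem_of_isComponent_compl he' hY hX hcard hex

theorem DIso.of_induce {X Y : Dgraph V} (hX : X.IsComponent Sᶜ) (hY : Y.IsComponent Sᶜ)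
    (hS : DIso (X.induce S) (Y.induce S)) (hSc : DIso (X.induce Sᶜ) (Y.induce Sᶜ)) :
    DIso X Y := by
  classical
  obtain ⟨e₁, he₁⟩ := hS
  obtain ⟨e₂, he₂⟩ := hSc
  let σ := Equiv.Set.sumCompl S
  refine ⟨σ.symm.trans ((e₁.sumCongr e₂).trans σ), fun a b => ?_⟩
  have hcross : ∀ {Z : Dgraph V}, Z.IsComponent Sᶜ →
      ∀ (s : S) (t : ↥Sᶜ), ¬ Z.Adj s t ∧ ¬ Z.Adj t s := fun hZ s t =>
    ⟨fun h => (hZ.mem_iff_of_adj h).2 t.2 s.2, fun h => (hZ.mem_iff_of_adj h).1 t.2 s.2⟩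
  obtain ⟨a, rfl⟩ := σ.surjective a
  obtain ⟨b, rfl⟩ := σ.surjective b
  rcases a with a | a <;> rcases b with b | b <;>
    simp only [Equiv.trans_apply, Equiv.sumCongr_apply, Sum.map_inl, Sum.map_inr, σ,
      Equiv.Set.sumCompl_symm_apply, Equiv.Set.sumCompl_symm_apply_compl,
      Equiv.Set.sumCompl_apply_inl, Equiv.Set.sumCompl_apply_inr]
  · exact he₁ a b
  · exact iff_of_false (hcross hX a b).1 (hcross hY _ _).1
  · exact iff_of_false (hcross hX b a).2 (hcross hY _ _).2
  · exact he₂ a b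

def partClasses (X : Dgraph V) (S : Set V) : Quotient (isoSetoid S) × Quotient (isoSetoid ↥Sᶜ) :=
  (⟦X.induce S⟧ᵢ, ⟦X.induce Sᶜ⟧ᵢ)

def partDeck [Fintype V] (X : Dgraph V) (S : Set V) :
    Multiset (Quotient (isoSetoid S) × Quotient (isoSetoid ↥Sᶜ)) :=
  univ.val.map fun v => (X.switchV v).partClasses S

theorem induce_switchV_of_mem (X : Dgraph V) {v : V} (hv : v ∈ S) :
    (X.switchV v).induce S = (X.induce S).switchV ⟨v, hv⟩ := by
  ext a b
  simp only [induce, switchV, Subtype.ext_iff]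

theorem induce_switchV_of_notMem (X : Dgraph V) {v : V} (hv : v ∉ S) :
    (X.switchV v).induce S = X.induce S := by
  ext a b
  have ha : (a : V) ≠ v := fun h => hv (h ▸ a.2)
  have hb : (b : V) ≠ v := fun h => hv (h ▸ b.2)
  simp [induce, switchV, ha, hb]

theorem partClasses_switchV_of_mem (X : Dgraph V) {v : V} (hv : v ∈ S) :
    (X.switchV v).partClasses S = (⟦(X.induce S).switchV ⟨v, hv⟩⟧ᵢ, ⟦X.induce Sᶜ⟧ᵢ) := by
  rw [partClasses, induce_switchV_of_mem X hv, induce_switchV_of_notMem X (not_not.2 hv)]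

theorem partClasses_switchV_of_notMem (X : Dgraph V) {v : V} (hv : v ∉ S) :
    ((X.switchV v).partClasses S).1 = ⟦X.induce S⟧ᵢ := by
  rw [partClasses, induce_switchV_of_notMem X hv]

theorem partClasses_eq_of_diso [Finite V] {X Y : Dgraph V} (hX : X.IsComponent Sᶜ)
    (hY : Y.IsComponent Sᶜ) (hcard : Nat.card S < Nat.card ↥Sᶜ) (h : DIso X Y) :
    X.partClasses S = Y.partClasses S := by
  obtain ⟨e, he, heS⟩ := DIso.exists_mem_iff_of_isComponent_compl hX hY hcard h
  have heSc : ∀ x, x ∈ Sᶜ ↔ e x ∈ Sᶜ := fun x => (heS x).not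
  exact Prod.ext (Quotient.sound ⟨e.subtypeEquiv heS, fun a b => he a b⟩)
    (Quotient.sound ⟨e.subtypeEquiv heSc, fun a b => he a b⟩)

theorem partDeck_eq_of_deck_eq [Fintype V] {X Y : Dgraph V} (hX : X.IsComponent Sᶜ)
    (hY : Y.IsComponent Sᶜ) (hcard : Nat.card S < Nat.card ↥Sᶜ) (h : X.deck = Y.deck) :
    X.partDeck S = Y.partDeck S := by
  have hrel : Multiset.Rel (fun X' Y' => X'.partClasses S = Y'.partClasses S)
      (univ.val.map X.switchV) (univ.val.map Y.switchV) :=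
    (rel_switchV_of_deck_eq h).mono fun X' hX' Y' hY' hXY => by
      obtain ⟨v, -, rfl⟩ := Multiset.mem_map.1 hX'
      obtain ⟨w, -, rfl⟩ := Multiset.mem_map.1 hY'
      exact partClasses_eq_of_diso (hX.switchV v) (hY.switchV w) hcard hXY
  have := Multiset.rel_eq.1 (Multiset.rel_map.2 hrel)
  rwa [Multiset.map_map, Multiset.map_map] at this

theorem partClasses_fst_eq_of_partDeck_eq [Fintype V] {X Y : Dgraph V}
    (h : X.partDeck S = Y.partDeck S) (hcard : Nat.card S < Nat.card ↥Sᶜ) :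
    (X.partClasses S).1 = (Y.partClasses S).1 := by
  classical
  by_contra hne
  set c := (X.partClasses S).1
  have hcount : ∀ Z : Dgraph V, (Z.partDeck S).countP (fun p => p.1 = c) =
      (univ.filter fun v => ((Z.switchV v).partClasses S).1 = c).card := fun Z => by
    rw [partDeck, Multiset.countP_map]; rfl
  have hX : Nat.card ↥Sᶜ ≤ (univ.filter fun v => ((X.switchV v).partClasses S).1 = c).card := by
    rw [Nat.card_eq_card_toFinset]
    exact card_le_card fun v hv =>
      mem_filter.2 ⟨mem_univ v, partClasses_switchV_of_notMem X (Set.mem_toFinset.1 hv)⟩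
  have hY : (univ.filter fun v => ((Y.switchV v).partClasses S).1 = c).card ≤ Nat.card S := by
    rw [Nat.card_eq_card_toFinset]
    refine card_le_card fun v hv => Set.mem_toFinset.2 (by_contra fun hvS => hne ?_)
    rw [← (mem_filter.1 hv).2, partClasses_switchV_of_notMem Y hvS]
    rfl
  have := hcount X
  rw [h, hcount Y] at this
  omega

theorem partClasses_eq_of_partDeck_eq [Fintype V] {X Y : Dgraph V}
    (h : X.partDeck S = Y.partDeck S) (hcard : Nat.card S < Nat.card ↥Sᶜ)
    (hY : ¬ (Y.induce S).SwitchStable) : X.partClasses S = Y.partClasses S := by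
  have hfst := partClasses_fst_eq_of_partDeck_eq h hcard
  obtain ⟨⟨v₀, hv₀⟩, hunstable⟩ := not_forall.1 hY
  have hmem : (Y.switchV v₀).partClasses S ∈ X.partDeck S :=
    h ▸ Multiset.mem_map_of_mem _ (mem_univ v₀)
  obtain ⟨v, -, hv⟩ := Multiset.mem_map.1 hmem
  rw [partClasses_switchV_of_mem Y hv₀] at hv
  by_cases hvS : v ∈ S
  · rw [partClasses_switchV_of_mem X hvS] at hv
    exact Prod.ext hfst (Prod.ext_iff.1 hv).2
  · have hclass := congrArg Prod.fst hv
    rw [partClasses_switchV_of_notMem X hvS] at hclass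
    exact absurd (Quotient.exact (hclass.symm.trans hfst)) hunstable

end Parts

end Dgraph

open Dgraph in
/-- If a digraph has exactly two components, the smaller of which is not
switching-stable, then it is reconstructible from its deck. -/
theorem reconstructible_two_components {V : Type*} [Fintype V] (G : Dgraph V)
    (u w : V) (hdiff : ¬ G.underlying.Reachable u w)
    (hcover : ∀ x : V, G.underlying.Reachable u x ∨ G.underlying.Reachable w x)
    (hsize : Nat.card (G.compSet u) < Nat.card (G.compSet w))
    (hA : ¬ SwitchStable (G.induce (G.compSet u))) :
    ∀ H : Dgraph V, H.deck = G.deck → DIso H G := by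
  intro H hdeck
  obtain ⟨K, hHK, hKdeck, hKG⟩ := exists_diso_underlying_eq_of_deck_eq hdeck u
  have hcompl := compSet_eq_compl hdiff hcover
  have hG : G.IsComponent (G.compSet u)ᶜ := hcompl ▸ G.isComponent_compSet w
  have hK : K.IsComponent (G.compSet u)ᶜ := (isComponent_congr hKG).2 hG
  rw [hcompl] at hsize
  have hparts :=
    partClasses_eq_of_partDeck_eq (partDeck_eq_of_deck_eq hK hG hsize hKdeck) hsize hA
  exact hHK.trans (DIso.of_induce hK hG (Quotient.exact (congrArg Prod.fst hparts))
    (Quotient.exact (congrArg Prod.snd hparts)))
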